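/- arXiv:2407.18160 — 4 statements merged into one kernel-verified Lean document; each statement's English description precedes it below -/
import Mathlib

section
/- Let D ∈ MBPD(n) and let r be a row index. For each fixed column b there is at most one column d such that D_{[r,r+1],[b,d]} is a doublecross; and for each fixed column d there is at most one column b such that D_{[r,r+1],[b,d]} is a doublecross. -/
namespace BPD

/-- The seven tiles of a marked bumpless pipedream:
blank, horizontal, vertical, plus, R, J, marked J. -/
inductive Tile
  | blank | horiz | vert | plus | rtile | jtile | mjtile
  deriving DecidableEq

/-- Does the tile contain a pipe end on its left edge? -/
def Tile.left : Tile → Bool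
  | .horiz | .plus | .jtile | .mjtile => true
  | _ => false

/-- Does the tile contain a pipe end on its right edge? -/
def Tile.right : Tile → Bool
  | .horiz | .plus | .rtile => true
  | _ => false

/-- Does the tile contain a pipe end on its top edge? -/
def Tile.up : Tile → Bool
  | .vert | .plus | .jtile | .mjtile => true
  | _ => false

/-- Does the tile contain a pipe end on its bottom edge? -/
def Tile.down : Tile → Bool
  | .vert | .plus | .rtile => true
  | _ => false

/-- A tile is heavy if it is a blank or a marked J; light otherwise. -/
def Tile.Heavy (t : Tile) : Prop := t = Tile.blank ∨ t = Tile.mjtile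

instance : DecidablePred Tile.Heavy := fun t =>
  decidable_of_iff (t = Tile.blank ∨ t = Tile.mjtile) Iff.rfl

/-- Tile matrices, with the meaningful rows/columns indexed by `1, …, n`. -/
abbrev Grid := ℕ → ℕ → Tile

/-- A valid marked bumpless pipedream of size `n`: pipe ends of adjacent tiles
match, a pipe enters every row from the right boundary, a pipe leaves every
column through the bottom boundary, no pipe meets the top or left boundary,
and (as a normalization making an `n × n` matrix) all entries outside the
board are `blank`. -/
def IsMBPD (n : ℕ) (D : Grid) : Prop :=
  (∀ i j, 1 ≤ i → i ≤ n → 1 ≤ j → j + 1 ≤ n → (D i j).right = (D i (j+1)).left) ∧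
  (∀ i j, 1 ≤ i → i + 1 ≤ n → 1 ≤ j → j ≤ n → (D i j).down = (D (i+1) j).up) ∧
  (∀ i, 1 ≤ i → i ≤ n → (D i n).right = true) ∧
  (∀ j, 1 ≤ j → j ≤ n → (D n j).down = true) ∧
  (∀ j, 1 ≤ j → j ≤ n → (D 1 j).up = false) ∧
  (∀ i, 1 ≤ i → i ≤ n → (D i 1).left = false) ∧
  (∀ i j, ¬ (1 ≤ i ∧ i ≤ n ∧ 1 ≤ j ∧ j ≤ n) → D i j = Tile.blank)

/-- `D_{r,[b,c]}` is a pipe segment: every strictly interior tile is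
horizontal or plus. -/
def PipeSegment (D : Grid) (r b c : ℕ) : Prop :=
  ∀ j < c, b < j → (D r j = Tile.horiz ∨ D r j = Tile.plus)

instance (D : Grid) (r b c : ℕ) : Decidable (PipeSegment D r b c) :=
  inferInstanceAs (Decidable (∀ j < c, b < j → (D r j = Tile.horiz ∨ D r j = Tile.plus)))

/-- `D_{[r,r+1],[b,d]}` is a doublecross. -/
def Doublecross (D : Grid) (r b d : ℕ) : Prop :=
  b < d ∧ PipeSegment D r b d ∧ PipeSegment D (r+1) b d ∧
    D r b = Tile.rtile ∧ D (r+1) d = Tile.jtile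

/-- The RJ subsequence of the tiles of row `r` in columns `a, …, b-1`. -/
def rjWord (D : Grid) (r a b : ℕ) : List Tile :=
  ((List.Ico a b).map (D r)).filter (fun t => decide (t = Tile.rtile ∨ t = Tile.jtile))

/-- A paired RJ word: zero or more consecutive pairs (an R then a J). -/
inductive Paired : List Tile → Prop
  | nil : Paired []
  | cons {w : List Tile} : Paired w → Paired (Tile.rtile :: Tile.jtile :: w)

/-- A single J followed by a paired word. -/
def TypeJ (w : List Tile) : Prop := ∃ w', Paired w' ∧ w = Tile.jtile :: w'

/-- A paired word followed by a single R. -/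
def TypeR (w : List Tile) : Prop := ∃ w', Paired w' ∧ w = w' ++ [Tile.rtile]

/-- A single J, then a paired word, then a single R. -/
def TypeJR (w : List Tile) : Prop :=
  ∃ w', Paired w' ∧ w = Tile.jtile :: (w' ++ [Tile.rtile])

/-- `D` admits the `(r,[b,d])`-droop. -/
def AdmitsDroop (D : Grid) (r b d : ℕ) : Prop :=
  b < d ∧
  (∀ j, b ≤ j → j ≤ d → ¬ (D r j).Heavy) ∧
  (∀ j, b ≤ j → j < d → ¬ (D (r+1) j).Heavy) ∧
  D (r+1) d ≠ Tile.mjtile ∧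
  PipeSegment D r b d ∧
  Paired (rjWord D (r+1) (b+1) d) ∧
  D r b ≠ Tile.horiz ∧ D r d ≠ Tile.plus

/-- `D` admits the `(r,[b,d])`-undroop. -/
def AdmitsUndroop (D : Grid) (r b d : ℕ) : Prop :=
  b < d ∧
  (∀ j, b ≤ j → j ≤ d → ¬ (D (r+1) j).Heavy) ∧
  (∀ j, b < j → j ≤ d → ¬ (D r j).Heavy) ∧
  D r b ≠ Tile.mjtile ∧
  PipeSegment D (r+1) b d ∧
  Paired (rjWord D r (b+1) d) ∧
  D (r+1) d ≠ Tile.horiz ∧ D (r+1) b ≠ Tile.plus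

/-- The (unmarked) tile with the given pipe ends on its
left/right/top/bottom edges (junk value `blank` for impossible combinations). -/
def mkTile : Bool → Bool → Bool → Bool → Tile
  | false, false, false, false => Tile.blank
  | true,  true,  false, false => Tile.horiz
  | false, false, true,  true  => Tile.vert
  | true,  true,  true,  true  => Tile.plus
  | false, true,  false, true  => Tile.rtile
  | true,  false, true,  false => Tile.jtile
  | _, _, _, _ => Tile.blank

/-- The `(r,[b,d])`-droop: the pipe segment of row `r` in columns `b, …, d`
drops to row `r+1`, kinks of row `r+1` strictly between columns `b` and `d`
move up to row `r`, vertical pipes are unchanged, and the corners transform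
as `R → blank` or `plus → J` at `(r,b)` and `blank → J` or `R → plus` at
`(r+1,d)`. -/
def droop (D : Grid) (r b d : ℕ) : Grid := fun i j =>
  if i = r ∧ j = b then mkTile (D r b).left false (D r b).up false
  else if i = r ∧ j = d then mkTile false (D r d).right (D r d).up true
  else if i = r + 1 ∧ j = b then mkTile (D (r+1) b).left true false (D (r+1) b).down
  else if i = r + 1 ∧ j = d then mkTile true (D (r+1) d).right true (D (r+1) d).down
  else if i = r ∧ b < j ∧ j < d then
    mkTile (D (r+1) j).left (D (r+1) j).right (D r j).up (D (r+1) j).down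
  else if i = r + 1 ∧ b < j ∧ j < d then
    mkTile (D r j).left (D r j).right (D (r+1) j).down (D (r+1) j).down
  else D i j

/-- The `(r,[b,d])`-undroop, inverse to the `(r,[b,d])`-droop: the pipe
segment of row `r+1` in columns `b, …, d` moves up to row `r`, kinks of row
`r` move down to row `r+1`, vertical pipes are unchanged, and the corners
transform as `blank → R` or `J → plus` at `(r,b)` and `J → blank` or
`plus → R` at `(r+1,d)`. -/
def undroop (D : Grid) (r b d : ℕ) : Grid := fun i j =>
  if i = r ∧ j = b then mkTile (D r b).left true (D r b).up true
  else if i = r ∧ j = d then mkTile true (D r d).right (D r d).up false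
  else if i = r + 1 ∧ j = b then mkTile (D (r+1) b).left false true (D (r+1) b).down
  else if i = r + 1 ∧ j = d then mkTile false (D (r+1) d).right false (D (r+1) d).down
  else if i = r ∧ b < j ∧ j < d then
    mkTile (D (r+1) j).left (D (r+1) j).right (D r j).up (D r j).up
  else if i = r + 1 ∧ b < j ∧ j < d then
    mkTile (D r j).left (D r j).right (D r j).up (D (r+1) j).down
  else D i j

/-- Remove the mark at `(r,c)` (if the tile there is a marked J). -/
def unmark (D : Grid) (r c : ℕ) : Grid := fun i j =>
  if i = r ∧ j = c ∧ D r c = Tile.mjtile then Tile.jtile else D i j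

/-- Mark the tile at `(r,c)` if it is a J tile. -/
def markIfJ (D : Grid) (r c : ℕ) : Grid := fun i j =>
  if i = r ∧ j = c ∧ D r c = Tile.jtile then Tile.mjtile else D i j

/-- `(r,c)` is an f-target of `D` with associated column `c'` (conditions
(f1), (f2) with `c'` minimal, (f3)). -/
def IsfTarget (n : ℕ) (D : Grid) (r c c' : ℕ) : Prop :=
  1 ≤ r ∧ r + 1 ≤ n ∧ 1 ≤ c ∧ c ≤ n ∧
  (D r c).Heavy ∧ (∀ j, c < j → j ≤ n → ¬ (D r j).Heavy) ∧
  c < c' ∧ c' ≤ n ∧ D (r+1) c' = Tile.jtile ∧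
  (∀ j, c < j → j < c' → D (r+1) j ≠ Tile.jtile) ∧
  (∀ j, 1 ≤ j → j < c' → ¬ (D (r+1) j).Heavy)

/-- `(r,c)` is an f*-target of `D` with associated column `c'` (conditions
(f1), (f*2) with `c'` the largest column carrying an R tile in row `r`, (f3)). -/
def IsfStarTarget (n : ℕ) (D : Grid) (r c c' : ℕ) : Prop :=
  1 ≤ r ∧ r + 1 ≤ n ∧ 1 ≤ c ∧ c ≤ n ∧
  (D r c).Heavy ∧ (∀ j, c < j → j ≤ n → ¬ (D r j).Heavy) ∧
  (∀ j, c < j → j ≤ n → D (r+1) j ≠ Tile.jtile ∧ D (r+1) j ≠ Tile.mjtile) ∧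
  1 ≤ c' ∧ c' ≤ n ∧ D r c' = Tile.rtile ∧
  (∀ j, c' < j → j ≤ n → D r j ≠ Tile.rtile) ∧
  (∀ j, 1 ≤ j → j < c' → ¬ (D (r+1) j).Heavy)

/-- An F-target is an f-target or an f*-target. -/
def IsFTarget (n : ℕ) (D : Grid) (r c c' : ℕ) : Prop :=
  IsfTarget n D r c c' ∨ IsfStarTarget n D r c c'

/-- Case B (blank) for an F-target. -/
def FCaseB (D : Grid) (r c : ℕ) : Prop := D r c = Tile.blank

/-- `b` is the left column of the window of the F-target `(r,c)`. -/
def FWindowLeft (D : Grid) (r c b : ℕ) : Prop :=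
  (D r c = Tile.blank ∧ b = c) ∨
  (D r c = Tile.mjtile ∧ 1 ≤ b ∧ b < c ∧ D r b = Tile.rtile ∧
    ∀ j, b < j → j < c → D r j ≠ Tile.rtile)

/-- Case C (crossing) for an F-target with window-left column `b`. -/
def FCaseC (D : Grid) (r c b : ℕ) : Prop :=
  D r c = Tile.mjtile ∧ PipeSegment D (r+1) b c

/-- Case C̸ (noncrossing) for an F-target with window-left column `b`. -/
def FCaseCbar (D : Grid) (r c b : ℕ) : Prop :=
  D r c = Tile.mjtile ∧ ¬ PipeSegment D (r+1) b c

/-- Case T (terminal) for an F-target. -/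
def FCaseT (n : ℕ) (D : Grid) (r c c' : ℕ) : Prop := IsfStarTarget n D r c c'

/-- Case D (doublecross) for an F-target. -/
def FCaseD (n : ℕ) (D : Grid) (r c c' : ℕ) : Prop :=
  IsfTarget n D r c c' ∧ ∃ d, c < d ∧ d < c' ∧ Doublecross D r d c'

/-- Case O (ordinary) for an F-target. -/
def FCaseO (n : ℕ) (D : Grid) (r c c' : ℕ) : Prop :=
  IsfTarget n D r c c' ∧ ¬ ∃ d, c < d ∧ d < c' ∧ Doublecross D r d c'

/-- `ρ` is the right droop column of the F-target `(r,c)` with associated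
column `c'`: `ρ = c'` in Cases T and O, and `ρ = d` in Case D. -/
def FRightDroop (n : ℕ) (D : Grid) (r c c' ρ : ℕ) : Prop :=
  ((FCaseT n D r c c' ∨ FCaseO n D r c c') ∧ ρ = c') ∨
  (IsfTarget n D r c c' ∧ c < ρ ∧ ρ < c' ∧ Doublecross D r ρ c')

/-- The F-move at the F-target `(r,c)` with window-left column `b`,
associated column `c'` and right droop column `ρ`: remove the mark at
`(r,c)` if marked; in Cases B and C (i.e. when `D_{r+1,[b,c]}` is a pipe
segment) perform the `(r,[c,ρ])`-undroop; then mark `(r+1,c')` if it is a J. -/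
def Fmove (D : Grid) (r c b c' ρ : ℕ) : Grid :=
  markIfJ
    (if PipeSegment D (r+1) b c then undroop (unmark D r c) r c ρ else unmark D r c)
    (r+1) c'

/-- `(r+1,c)` is an e-target of `D` with `c'` as in condition (e2)
(conditions (e1), (e2) with `c'` maximal, (e3)). -/
def IseTarget (n : ℕ) (D : Grid) (r c c' : ℕ) : Prop :=
  1 ≤ r ∧ r + 1 ≤ n ∧ 1 ≤ c ∧ c ≤ n ∧
  (D (r+1) c).Heavy ∧ (∀ j, 1 ≤ j → j < c → ¬ (D (r+1) j).Heavy) ∧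
  1 ≤ c' ∧ c' < c ∧ D r c' = Tile.rtile ∧ ¬ PipeSegment D (r+1) c' c ∧
  (∀ j, c' < j → j < c → D r j = Tile.rtile → PipeSegment D (r+1) j c) ∧
  (∀ j, c' < j → j ≤ n → ¬ (D r j).Heavy)

/-- `(r+1,c)` is an e*-target of `D` with `c'` as in condition (e2)
(conditions (e*1), (e2) with `c'` maximal, (e3)). -/
def IseStarTarget (n : ℕ) (D : Grid) (r c c' : ℕ) : Prop :=
  1 ≤ r ∧ r + 1 ≤ n ∧ 1 ≤ c ∧ c ≤ n ∧
  (∀ j, 1 ≤ j → j ≤ n → ¬ (D (r+1) j).Heavy) ∧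
  (D r c = Tile.rtile ∨ D (r+1) c = Tile.rtile) ∧
  (∀ j, c < j → j ≤ n → D r j ≠ Tile.rtile ∧ D (r+1) j ≠ Tile.rtile) ∧
  1 ≤ c' ∧ c' < c ∧ D r c' = Tile.rtile ∧ ¬ PipeSegment D (r+1) c' c ∧
  (∀ j, c' < j → j < c → D r j = Tile.rtile → PipeSegment D (r+1) j c) ∧
  (∀ j, c' < j → j ≤ n → ¬ (D r j).Heavy)

/-- An E-target is an e-target or an e*-target. -/
def IsETarget (n : ℕ) (D : Grid) (r c c' : ℕ) : Prop :=
  IseTarget n D r c c' ∨ IseStarTarget n D r c c'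

/-- Case L (left turn) for an E-target `(r+1,c)` with window-left `c'`. -/
def ECaseL (D : Grid) (r c c' : ℕ) : Prop := ¬ PipeSegment D r c' c

/-- Case D (doublecross) for an E-target. -/
def ECaseD (D : Grid) (r c c' : ℕ) : Prop :=
  PipeSegment D r c' c ∧ ∃ d, Doublecross D r c' d

/-- Case S (straight) for an E-target. -/
def ECaseS (D : Grid) (r c c' : ℕ) : Prop :=
  PipeSegment D r c' c ∧ ¬ ∃ d, Doublecross D r c' d

/-- Case I (initial) for an E-target. -/
def ECaseI (n : ℕ) (D : Grid) (r c c' : ℕ) : Prop := IseStarTarget n D r c c'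

/-- Case P (plus) for an E-target. -/
def ECaseP (n : ℕ) (D : Grid) (r c c' : ℕ) : Prop :=
  IseTarget n D r c c' ∧ D r c = Tile.plus

/-- Case P̸ (no plus) for an E-target. -/
def ECasePbar (n : ℕ) (D : Grid) (r c c' : ℕ) : Prop :=
  IseTarget n D r c c' ∧ D r c ≠ Tile.plus

/-- `lam` is the left droop column of the E-target `(r+1,c)` with
window-left `c'`. -/
def ELeftDroop (D : Grid) (r c c' lam : ℕ) : Prop :=
  (ECaseS D r c c' ∧ lam = c') ∨
  (ECaseD D r c c' ∧ c' < lam ∧ D (r+1) lam = Tile.jtile ∧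
    ∀ j, c' < j → j < lam → D (r+1) j ≠ Tile.jtile) ∨
  (ECaseL D r c c' ∧ c' < lam ∧ D r lam = Tile.jtile ∧
    ∀ j, c' < j → j < lam → D r j ≠ Tile.jtile)

/-- `ρ` is the right droop column of the E-target `(r+1,c)` with
window-left `c'`. -/
def ERightDroop (n : ℕ) (D : Grid) (r c c' ρ : ℕ) : Prop :=
  ((ECaseI n D r c c' ∨ ECasePbar n D r c c') ∧ ρ = c) ∨
  (ECaseP n D r c c' ∧ ρ < c ∧ D (r+1) ρ = Tile.rtile ∧
    ∀ j, ρ < j → j < c → D (r+1) j ≠ Tile.rtile)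

/-- The E-move at the E-target `(r+1,c)` with window-left column `c'`,
left droop column `lam` and right droop column `ρ`: remove the mark at
`(r+1,c)` if marked; in Cases S and D (i.e. when `D_{r,[c',c]}` is a pipe
segment) perform the `(r,[lam,ρ])`-droop; then mark `(r,lam)` if it is a J. -/
def Emove (D : Grid) (r c c' lam ρ : ℕ) : Grid :=
  markIfJ
    (if PipeSegment D r c' c then droop (unmark D (r+1) c) r lam ρ
     else unmark D (r+1) c)
    r lam

/-- Demazure (0-Hecke) product `s_a * w` (left multiplication by a simple
reflection): it is `s_a w` when `ℓ(s_a w) = ℓ(w) + 1`, i.e. when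
`w⁻¹ a < w⁻¹ (a+1)`, and `w` otherwise. -/
def dmul (a : ℕ) (w : Equiv.Perm ℕ) : Equiv.Perm ℕ :=
  if w⁻¹ a < w⁻¹ (a+1) then Equiv.swap a (a+1) * w else w

/-- Demazure (0-Hecke) product `w * s_a` (right multiplication by a simple
reflection): it is `w s_a` when `ℓ(w s_a) = ℓ(w) + 1`, i.e. when
`w a < w (a+1)`, and `w` otherwise. -/
def rdmul (w : Equiv.Perm ℕ) (a : ℕ) : Equiv.Perm ℕ :=
  if w a < w (a+1) then w * Equiv.swap a (a+1) else w

/-- The permutation `w(B) = s_{a_ℓ} * ⋯ * s_{a_1}` (Demazure product)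
associated to a sequence of biletters `B = ((i_1,a_1), …, (i_ℓ,a_ℓ))`. -/
def cpPerm (B : List (ℕ × ℕ)) : Equiv.Perm ℕ :=
  B.foldl (fun w p => dmul p.2 w) 1

/-- Coxeter length (inversion count on `{1,…,n}`) of a permutation
supported on `{1,…,n}`. -/
def lenPerm (n : ℕ) (w : Equiv.Perm ℕ) : ℕ :=
  (((Finset.Icc 1 n) ×ˢ (Finset.Icc 1 n)).filter
    (fun p => p.1 < p.2 ∧ w p.2 < w p.1)).card

/-- The list of states `(row, column, entered-from-East?)` visited by the pipe
of an MBPD beginning at the given state (with fuel). In an MBPD, every pipe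
moves only left and down. -/
def visitsFuel (n : ℕ) (D : Grid) : ℕ → ℕ → ℕ → Bool → List (ℕ × ℕ × Bool)
  | 0, _, _, _ => []
  | fuel+1, r, c, true =>
    (r, c, true) ::
      (match D r c with
       | Tile.horiz | Tile.plus => if 1 < c then visitsFuel n D fuel r (c-1) true else []
       | Tile.rtile => if r < n then visitsFuel n D fuel (r+1) c false else []
       | _ => [])
  | fuel+1, r, c, false =>
    (r, c, false) ::
      (match D r c with
       | Tile.vert | Tile.plus => if r < n then visitsFuel n D fuel (r+1) c false else []
       | Tile.jtile | Tile.mjtile => if 1 < c then visitsFuel n D fuel r (c-1) true else []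
       | _ => [])

/-- The pipe entering the right boundary of the MBPD at row `i` passes
through the tile `(r,c)`, entering it from the East (`e = true`) or from the
North (`e = false`). -/
def Visits (n : ℕ) (D : Grid) (i r c : ℕ) (e : Bool) : Prop :=
  (r, c, e) ∈ visitsFuel n D (2*n+2) i n true

/-- Pipes `i` and `j` of the MBPD cross at the plus tile `(r,c)`. -/
def CrossAt (n : ℕ) (D : Grid) (i j r c : ℕ) : Prop :=
  D r c = Tile.plus ∧
    ((Visits n D i r c true ∧ Visits n D j r c false) ∨
     (Visits n D i r c false ∧ Visits n D j r c true))

/-- Pipes `i` and `j` of the MBPD cross (at least once). -/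
def Crosses (n : ℕ) (D : Grid) (i j : ℕ) : Prop := ∃ r c, CrossAt n D i j r c

open Classical in
/-- The permutation associated to an MBPD: the pipe entering the right
boundary at row `i` exits the bottom boundary at column `w(i)`, where
crossings of a pair of pipes after their first crossing are ignored.
Equivalently, it is the unique permutation of `{1,…,n}` whose inversions are
exactly the pairs of pipes that cross at least once. -/
noncomputable def permOf (n : ℕ) (D : Grid) : Equiv.Perm ℕ :=
  if h : ∃ w : Equiv.Perm ℕ,
      (∀ k, (k < 1 ∨ n < k) → w k = k) ∧
      (∀ i j, 1 ≤ i → i < j → j ≤ n → (w j < w i ↔ Crosses n D i j))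
  then h.choose else 1

/-- An unmarked, reduced MBPD: no marked J tile, and no two pipes cross more
than once. -/
def ReducedMBPD (n : ℕ) (D : Grid) : Prop :=
  (∀ i j, D i j ≠ Tile.mjtile) ∧
  (∀ i j, 1 ≤ i → i < j → j ≤ n →
    ∀ r c r' c', CrossAt n D i j r c → CrossAt n D i j r' c' → r = r' ∧ c = c')

/-- A biletter: a pair `(i,a)` with `1 ≤ i ≤ a < n`. -/
def IsBiletter (n : ℕ) (p : ℕ × ℕ) : Prop := 1 ≤ p.1 ∧ p.1 ≤ p.2 ∧ p.2 < n

/-- The order on biletters: `p > q` iff `p.1 > q.1`, or `p.1 = q.1` and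
`p.2 < q.2`. -/
def BiletterGT (p q : ℕ × ℕ) : Prop := q.1 < p.1 ∨ (q.1 = p.1 ∧ p.2 < q.2)

/-- A reverse compatible pair: a strictly decreasing sequence of biletters. -/
def IsRCP (n : ℕ) (B : List (ℕ × ℕ)) : Prop :=
  (∀ p ∈ B, IsBiletter n p) ∧ B.Chain' BiletterGT

/-- The weight of a sequence of biletters: coordinate `i` counts the
biletters with first entry `i`. -/
def cpWeight (B : List (ℕ × ℕ)) (i : ℕ) : ℕ := B.countP (fun p => decide (p.1 = i))

/-- The weight of an MBPD: coordinate `i` counts the heavy tiles in row `i`. -/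
def rowWeight (n : ℕ) (D : Grid) (i : ℕ) : ℕ :=
  ((Finset.Icc 1 n).filter (fun j => (D i j).Heavy)).card

/-- The tiles of a (not necessarily reduced) pipedream: plus, bump, and the
J tile used on the antidiagonal boundary. -/
inductive PDTile
  | pplus | bump | pj
  deriving DecidableEq

/-- A pipedream of size `n`: a tiling of the staircase
`{(i,j) : i + j ≤ n + 1}` with J tiles exactly on the antidiagonal
`i + j = n + 1` and plus or bump tiles elsewhere (normalized to `bump`
outside the staircase). -/
def IsPD (n : ℕ) (P : ℕ → ℕ → PDTile) : Prop :=
  (∀ i j, 1 ≤ i → 1 ≤ j → i + j = n + 1 → P i j = PDTile.pj) ∧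
  (∀ i j, 1 ≤ i → 1 ≤ j → i + j ≤ n → (P i j = PDTile.pplus ∨ P i j = PDTile.bump)) ∧
  (∀ i j, ¬ (1 ≤ i ∧ 1 ≤ j ∧ i + j ≤ n + 1) → P i j = PDTile.bump)

/-- The tiling of the staircase with plus tiles exactly at the positions
`(i_k, a_k - i_k + 1)` for the biletters `(i_k, a_k)` of `B`, bump tiles at
all other interior positions, and J tiles on the antidiagonal. -/
def rcpToPD (n : ℕ) (B : List (ℕ × ℕ)) : ℕ → ℕ → PDTile := fun i j =>
  if 1 ≤ i ∧ 1 ≤ j ∧ i + j ≤ n + 1 then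
    if i + j = n + 1 then PDTile.pj
    else if (i, i + j - 1) ∈ B then PDTile.pplus else PDTile.bump
  else PDTile.bump

/-- The list of states `(row, column, entered-from-West?)` visited by a pipe
of a pipedream beginning at the given state (with fuel). In a pipedream,
every pipe moves only right and up. -/
def pdVisitsFuel (n : ℕ) (P : ℕ → ℕ → PDTile) : ℕ → ℕ → ℕ → Bool → List (ℕ × ℕ × Bool)
  | 0, _, _, _ => []
  | fuel+1, r, c, true =>
    (r, c, true) ::
      (match P r c with
       | PDTile.pplus => if c < n then pdVisitsFuel n P fuel r (c+1) true else []
       | PDTile.bump | PDTile.pj =>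
           if 1 < r then pdVisitsFuel n P fuel (r-1) c false else [])
  | fuel+1, r, c, false =>
    (r, c, false) ::
      (match P r c with
       | PDTile.pplus => if 1 < r then pdVisitsFuel n P fuel (r-1) c false else []
       | PDTile.bump => if c < n then pdVisitsFuel n P fuel r (c+1) true else []
       | PDTile.pj => [])

/-- The pipe entering the left boundary of the pipedream at row `i` passes
through the tile `(r,c)`, entering it from the West (`e = true`) or from the
South (`e = false`). -/
def PDVisits (n : ℕ) (P : ℕ → ℕ → PDTile) (i r c : ℕ) (e : Bool) : Prop :=
  (r, c, e) ∈ pdVisitsFuel n P (2*n+2) i 1 true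

/-- Pipes `i` and `j` of a pipedream cross (at least once). -/
def PDCrosses (n : ℕ) (P : ℕ → ℕ → PDTile) (i j : ℕ) : Prop :=
  ∃ r c, P r c = PDTile.pplus ∧
    ((PDVisits n P i r c true ∧ PDVisits n P j r c false) ∨
     (PDVisits n P i r c false ∧ PDVisits n P j r c true))

open Classical in
/-- The permutation associated to a pipedream: the pipe entering the left
boundary at row `i` exits the top boundary at column `w(i)`, where crossings
of a pair of pipes after their first crossing are ignored. Equivalently, it
is the unique permutation of `{1,…,n}` whose inversions are exactly the pairs
of pipes that cross at least once. -/
noncomputable def pdPermOf (n : ℕ) (P : ℕ → ℕ → PDTile) : Equiv.Perm ℕ :=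
  if h : ∃ w : Equiv.Perm ℕ,
      (∀ k, (k < 1 ∨ n < k) → w k = k) ∧
      (∀ i j, 1 ≤ i → i < j → j ≤ n → (w j < w i ↔ PDCrosses n P i j))
  then h.choose else 1

/-- The weight of a pipedream: coordinate `i` counts the plus tiles in row `i`. -/
def pdWeight (n : ℕ) (P : ℕ → ℕ → PDTile) (i : ℕ) : ℕ :=
  ((Finset.Icc 1 n).filter (fun j => P i j = PDTile.pplus)).card

/-- for each fixed `b` there is at most one `d` making
`D_{[r,r+1],[b,d]}` a doublecross, and for each fixed `d` at most one such `b`. -/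
theorem statement4 (n : ℕ) (D : Grid) (hD : IsMBPD n D) (r : ℕ)
    (hr : 1 ≤ r) (hrn : r + 1 ≤ n) :
    (∀ b d d', 1 ≤ b → d ≤ n → d' ≤ n →
      Doublecross D r b d → Doublecross D r b d' → d = d') ∧
    (∀ b b' d, 1 ≤ b → 1 ≤ b' → d ≤ n →
      Doublecross D r b d → Doublecross D r b' d → b = b') := by
  constructor
  · intro b d d' _ _ _ h h'
    obtain ⟨hbd, _, hseg, _, hj⟩ := h
    obtain ⟨hbd', _, hseg', _, hj'⟩ := h'
    by_contra hne
    rcases Nat.lt_or_ge d d' with hlt | hge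
    · rcases hseg' d hlt hbd with hh | hh <;> simp [hh] at hj
    · have hlt : d' < d := lt_of_le_of_ne hge (fun e => hne e.symm)
      rcases hseg d' hlt hbd' with hh | hh <;> simp [hh] at hj'
  · intro b b' d _ _ _ h h'
    obtain ⟨hbd, hseg, _, hrt, _⟩ := h
    obtain ⟨hbd', hseg', _, hrt', _⟩ := h'
    by_contra hne
    rcases Nat.lt_or_ge b b' with hlt | hge
    · rcases hseg b' hbd' hlt with hh | hh <;> simp [hh] at hrt'
    · have hlt : b' < b := lt_of_le_of_ne hge (fun e => hne e.symm)
      rcases hseg' b hbd hlt with hh | hh <;> simp [hh] at hrt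

end BPD
end

section
/- Let (r,c) be an F-target of D ∈ MBPD(n) with associated column c'. Then: (1) D_{r+1,c} is a horizontal tile or an R tile; (2) D_{r+1,[c,c']} is a pipe segment; (3) if (r,c) is an f*-target, then D_{r+1,c'} is a plus tile and row r+1 of D contains no R tile strictly to the right of column c. -/
namespace BPD

lemma heavy_right_false {t : Tile} (h : t.Heavy) : t.right = false := by
  rcases h with h | h <;> subst h <;> rfl

lemma heavy_down_false {t : Tile} (h : t.Heavy) : t.down = false := by
  rcases h with h | h <;> subst h <;> rfl

lemma left_true_cases {t : Tile} (h : t.left = true) :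
    t = Tile.horiz ∨ t = Tile.plus ∨ t = Tile.jtile ∨ t = Tile.mjtile := by
  cases t <;> simp_all [Tile.left]

lemma right_true_cases {t : Tile} (h : t.right = true) :
    t = Tile.horiz ∨ t = Tile.plus ∨ t = Tile.rtile := by
  cases t <;> simp_all [Tile.right]

/-- Forward chain lemma in row `r+1`: starting from a tile at column `c`
with a pipe on its right edge, as long as J and marked-J tiles are absent,
every subsequent tile is horizontal or plus. -/
lemma chain_row (n : ℕ) (D : Grid) (r c m : ℕ) (hD : IsMBPD n D)
    (hrn : r + 1 ≤ n) (hc : 1 ≤ c) (hm : m ≤ n)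
    (hseed : (D (r+1) c).right = true)
    (hnj : ∀ j, c < j → j ≤ m → D (r+1) j ≠ Tile.jtile ∧ D (r+1) j ≠ Tile.mjtile) :
    ∀ j, c < j → j ≤ m → D (r+1) j = Tile.horiz ∨ D (r+1) j = Tile.plus := by
  obtain ⟨hH, -, -, -, -, -, -⟩ := hD
  intro j
  induction j using Nat.strong_induction_on with
  | _ j ih =>
    intro hj hjm
    have hleft : (D (r+1) j).left = true := by
      have hjn : j ≤ n := le_trans hjm hm
      have hmatch := hH (r+1) (j-1) (by omega) hrn (by omega) (by omega)
      rw [show j - 1 + 1 = j by omega] at hmatch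
      rw [← hmatch]
      rcases Nat.lt_or_ge c (j-1) with hc' | hc'
      · rcases ih (j-1) (by omega) hc' (by omega) with h | h <;> rw [h] <;> rfl
      · rw [show j - 1 = c by omega]; exact hseed
    rcases left_true_cases hleft with h | h | h | h
    · exact Or.inl h
    · exact Or.inr h
    · exact absurd h (hnj j hj hjm).1
    · exact absurd h (hnj j hj hjm).2

/-- If the pipe in row `r` is present on the right edge of column `j > c`,
and the tile at `(r,c)` has no pipe on its right edge, and all tiles strictly
right of `c` are light, then some column in `(c, j]` carries an R tile. -/
lemma exists_rtile (n : ℕ) (D : Grid) (r c : ℕ) (hD : IsMBPD n D)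
    (hr : 1 ≤ r) (hrn : r ≤ n) (hc : 1 ≤ c)
    (hlight : ∀ j, c < j → j ≤ n → ¬ (D r j).Heavy)
    (hcr : (D r c).right = false) :
    ∀ j, c < j → j ≤ n → (D r j).right = true →
      ∃ k, c < k ∧ k ≤ j ∧ D r k = Tile.rtile := by
  obtain ⟨hH, -, -, -, -, -, -⟩ := hD
  intro j
  induction j using Nat.strong_induction_on with
  | _ j ih =>
    intro hj hjn hright
    rcases right_true_cases hright with h | h | h
    case inr.inr => exact ⟨j, hj, le_refl j, h⟩
    all_goals {
      have hleft : (D r j).left = true := by rw [h]; rfl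
      have hmatch := hH r (j-1) hr hrn (by omega) (by omega)
      rw [show j - 1 + 1 = j by omega] at hmatch
      have hright' : (D r (j-1)).right = true := by rw [hmatch, hleft]
      have hne : j - 1 ≠ c := by
        intro hcon; rw [hcon, hcr] at hright'; exact Bool.false_ne_true hright'
      obtain ⟨k, hk1, hk2, hk3⟩ :=
        ih (j-1) (by omega) (by omega) (by omega) hright'
      exact ⟨k, hk1, by omega, hk3⟩ }

/-- In an f*-target, the associated column `c'` lies strictly right of `c`. -/
lemma fstar_c_lt_c' (n : ℕ) (D : Grid) (r c c' : ℕ) (hD : IsMBPD n D)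
    (hS : IsfStarTarget n D r c c') : c < c' := by
  obtain ⟨hr, hrn, hc, hcn, hheavy, hlight, hnj, hc'1, hc'n, hrt, hmax, hf3⟩ := hS
  have hrn' : r ≤ n := by omega
  have hcr : (D r c).right = false := heavy_right_false hheavy
  have hclt : c < n := by
    by_contra h
    have hce : c = n := by omega
    rw [hce, hD.2.2.1 r hr hrn'] at hcr
    exact Bool.true_eq_false.mp hcr
  have hnr : (D r n).right = true := hD.2.2.1 r hr hrn'
  obtain ⟨k, hk1, hk2, hk3⟩ :=
    exists_rtile n D r c hD hr hrn' hc hlight hcr n hclt (le_refl n) hnr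
  by_contra hcon
  rcases Nat.lt_or_ge c' k with h | h
  · exact hmax k h hk2 hk3
  · omega

/-- for an F-target `(r,c)` with associated column `c'`:
(1) `D_{r+1,c}` is horizontal or an R tile; (2) `D_{r+1,[c,c']}` is a pipe
segment; (3) if `(r,c)` is an f*-target then `D_{r+1,c'}` is a plus tile and
row `r+1` has no R tile strictly to the right of column `c`. -/
theorem statement5 (n : ℕ) (D : Grid) (r c c' : ℕ) (hD : IsMBPD n D)
    (hT : IsFTarget n D r c c') :
    (D (r+1) c = Tile.horiz ∨ D (r+1) c = Tile.rtile) ∧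
    PipeSegment D (r+1) c c' ∧
    (IsfStarTarget n D r c c' →
      D (r+1) c' = Tile.plus ∧ ∀ j, c < j → j ≤ n → D (r+1) j ≠ Tile.rtile) := by
  -- extract the common data of the two kinds of targets
  have hcommon : 1 ≤ r ∧ r + 1 ≤ n ∧ 1 ≤ c ∧ c ≤ n ∧ (D r c).Heavy ∧ c < c' ∧ c' ≤ n ∧
      (∀ j, c < j → j < c' → D (r+1) j ≠ Tile.jtile ∧ D (r+1) j ≠ Tile.mjtile) ∧
      (∀ j, 1 ≤ j → j < c' → ¬ (D (r+1) j).Heavy) := by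
    rcases hT with hf | hS
    · obtain ⟨hr, hrn, hc, hcn, hheavy, hlight, hcc', hc'n, hj, hnoj, hf3⟩ := hf
      refine ⟨hr, hrn, hc, hcn, hheavy, hcc', hc'n, ?_, hf3⟩
      intro j hj1 hj2
      refine ⟨hnoj j hj1 hj2, ?_⟩
      intro hcon
      exact hf3 j (by omega) hj2 (Or.inr hcon)
    · obtain ⟨hr, hrn, hc, hcn, hheavy, hlight, hnj, hc'1, hc'n, hrt, hmax, hf3⟩ := hS
      have hcc' := fstar_c_lt_c' n D r c c' hD
        ⟨hr, hrn, hc, hcn, hheavy, hlight, hnj, hc'1, hc'n, hrt, hmax, hf3⟩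
      exact ⟨hr, hrn, hc, hcn, hheavy, hcc', hc'n,
        fun j hj1 hj2 => hnj j hj1 (by omega), hf3⟩
  obtain ⟨hr, hrn, hc, hcn, hheavy, hcc', hc'n, hnoj, hf3⟩ := hcommon
  -- (1): the tile below (r,c)
  have hup : (D (r+1) c).up = false := by
    have := hD.2.1 r c hr hrn hc hcn
    rw [← this]; exact heavy_down_false hheavy
  have hnh : ¬ (D (r+1) c).Heavy := hf3 c hc hcc'
  have h1 : D (r+1) c = Tile.horiz ∨ D (r+1) c = Tile.rtile := by
    cases ht : D (r+1) c <;> rw [ht] at hup hnh <;>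
      simp_all [Tile.up, Tile.Heavy]
  have hseed : (D (r+1) c).right = true := by
    rcases h1 with h | h <;> rw [h] <;> rfl
  -- (2): pipe segment
  have h2 : PipeSegment D (r+1) c c' := by
    intro j hj1 hj2
    exact chain_row n D r c (c'-1) hD hrn hc (by omega) hseed
      (fun k hk1 hk2 => hnoj k hk1 (by omega)) j hj2 (by omega)
  refine ⟨h1, h2, ?_⟩
  -- (3): the f*-target case
  intro hS
  obtain ⟨hr', hrn', hc', hcn', hheavy', hlight', hnj', hc'1', hc'n', hrt', hmax', hf3'⟩ := hS
  have hcc'' : c < c' := fstar_c_lt_c' n D r c c' hD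
    ⟨hr', hrn', hc', hcn', hheavy', hlight', hnj', hc'1', hc'n', hrt', hmax', hf3'⟩
  have hchain : ∀ j, c < j → j ≤ n → D (r+1) j = Tile.horiz ∨ D (r+1) j = Tile.plus :=
    chain_row n D r c n hD hrn hc (le_refl n) hseed hnj'
  have hup' : (D (r+1) c').up = true := by
    have := hD.2.1 r c' hr hrn hc'1' hc'n'
    rw [← this, hrt']; rfl
  constructor
  · rcases hchain c' hcc'' hc'n' with h | h
    · rw [h] at hup'; exact absurd hup' (by simp [Tile.up])
    · exact h
  · intro j hj1 hj2 hcon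
    rcases hchain j hj1 hj2 with h | h <;> rw [hcon] at h <;> simp_all

end BPD
end

section
/- Let (r,c) be an F-target of D ∈ MBPD(n) with associated column c', and let S = D_{r,[c+1,c'-1]}. Then S consists of light tiles and its RJ subsequence is paired or of type R. Moreover: (a) the RJ subsequence of S is of type R if and only if D_{r,c'} is a plus tile; in this case, if d is the column of the last R tile of S and (r,c) is not an f*-target, then D_{[r,r+1],[d,c']} is a doublecross; (b) the RJ subsequence of S is paired if and only if D_{r,c'} is a vertical tile or an R tile. -/
namespace BPD

/-! ### Auxiliary machinery for STATEMENT 6 -/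

/-- Alternating RJ words: `Alt s s' w` means `w` is an RJ word consistent with
incoming horizontal pipe-state `s` and outgoing state `s'`. -/
inductive Alt : Bool → Bool → List Tile → Prop
  | nil (s : Bool) : Alt s s []
  | jcons {s : Bool} {w : List Tile} : Alt false s w → Alt true s (Tile.jtile :: w)
  | rcons {s : Bool} {w : List Tile} : Alt true s w → Alt false s (Tile.rtile :: w)

lemma alt_classify {s s' : Bool} {w : List Tile} (h : Alt s s' w) :
    (s = false → s' = false → Paired w) ∧
    (s = false → s' = true → TypeR w) ∧
    (s = true → s' = false → ∃ u, Paired u ∧ w = Tile.jtile :: u) ∧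
    (s = true → s' = true → w = [] ∨
      ∃ u, Paired u ∧ w = Tile.jtile :: (u ++ [Tile.rtile])) := by
  induction h with
  | nil s =>
    cases s
    · exact ⟨fun _ _ => Paired.nil, fun _ h => by simp at h,
        fun h _ => by simp at h, fun h _ => by simp at h⟩
    · exact ⟨fun h _ => by simp at h, fun h _ => by simp at h,
        fun _ h => by simp at h, fun _ _ => Or.inl rfl⟩
  | jcons h ih =>
    refine ⟨fun h1 _ => by simp at h1, fun h1 _ => by simp at h1,
      fun _ h2 => ?_, fun _ h2 => ?_⟩
    · exact ⟨_, ih.1 rfl h2, rfl⟩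
    · obtain ⟨u, hu, rfl⟩ := ih.2.1 rfl h2
      exact Or.inr ⟨u, hu, rfl⟩
  | rcons h ih =>
    refine ⟨fun _ h2 => ?_, fun _ h2 => ?_,
      fun h1 _ => by simp at h1, fun h1 _ => by simp at h1⟩
    · obtain ⟨u, hu, rfl⟩ := ih.2.2.1 rfl h2
      exact Paired.cons hu
    · rcases ih.2.2.2 rfl h2 with h' | ⟨u, hu, rfl⟩
      · subst h'; exact ⟨[], Paired.nil, rfl⟩
      · exact ⟨Tile.rtile :: Tile.jtile :: u, Paired.cons hu, rfl⟩

lemma alt_paired {s' : Bool} {w : List Tile} (h : Alt false s' w) (hs : s' = false) :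
    Paired w := (alt_classify h).1 rfl hs

lemma alt_typeR {s' : Bool} {w : List Tile} (h : Alt false s' w) (hs : s' = true) :
    TypeR w := (alt_classify h).2.1 rfl hs

lemma Paired.length_even {w : List Tile} (h : Paired w) : w.length % 2 = 0 := by
  induction h with
  | nil => simp
  | cons _ ih => simp only [List.length_cons]; omega

lemma paired_not_typeR {w : List Tile} (hp : Paired w) (ht : TypeR w) : False := by
  obtain ⟨u, hu, rfl⟩ := ht
  have h1 := hp.length_even
  have h2 := hu.length_even
  simp only [List.length_append, List.length_cons, List.length_nil] at h1
  omega

lemma typeR_nil_false (h : TypeR ([] : List Tile)) : False := by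
  obtain ⟨u, _, hu⟩ := h
  simp at hu

lemma tile_A : ∀ t : Tile, ¬ t.Heavy → t.left = false → t ≠ Tile.rtile →
    t.right = false := by intro t; cases t <;> decide

lemma tile_B : ∀ t : Tile, ¬ t.Heavy → t.left = true → t ≠ Tile.rtile →
    t ≠ Tile.jtile → t.right = true := by intro t; cases t <;> decide

lemma tile_C : ∀ t : Tile, ¬ t.Heavy → t.left = true → t.right = true →
    t = Tile.horiz ∨ t = Tile.plus := by intro t; cases t <;> decide

lemma tile_D : ∀ t : Tile, ¬ t.Heavy → t.up = false → t.right = true := by intro t; cases t <;> decide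

lemma tile_E : ∀ t : Tile, ¬ t.Heavy → t.left = true → t ≠ Tile.jtile →
    t.right = true := by intro t; cases t <;> decide

lemma tile_F : ∀ t : Tile, ¬ t.Heavy → t.down = true →
    t = Tile.vert ∨ t = Tile.plus ∨ t = Tile.rtile := by intro t; cases t <;> decide

/-- Reading a run of light, horizontally-matched tiles in a row produces an
alternating RJ word between the two boundary states. -/
lemma row_alt (D : Grid) (r : ℕ) :
    ∀ k a b, a + k = b →
      (∀ j, a ≤ j → j < b →
        ¬ (D r j).Heavy ∧ (D r j).right = (D r (j+1)).left) →
      Alt ((D r a).left) ((D r b).left) (rjWord D r a b) := by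
  intro k
  induction k with
  | zero =>
    intro a b hab _
    obtain rfl : a = b := by omega
    have hw : rjWord D r a a = [] := by
      simp [rjWord, List.Ico.eq_nil_of_le le_rfl]
    rw [hw]
    exact Alt.nil _
  | succ k ih =>
    intro a b hab hcond
    have hab' : a < b := by omega
    obtain ⟨hheavy, hmatch⟩ := hcond a le_rfl hab'
    have hrec := ih (a+1) b (by omega) (fun j h1 h2 => hcond j (by omega) h2)
    have hcons : rjWord D r a b
        = (List.filter (fun t => decide (t = Tile.rtile ∨ t = Tile.jtile))
            (D r a :: (List.Ico (a+1) b).map (D r))) := by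
      rw [rjWord, List.Ico.eq_cons hab', List.map_cons]
    cases htile : D r a with
    | blank => exact absurd (Or.inl htile) hheavy
    | mjtile => exact absurd (Or.inr htile) hheavy
    | horiz =>
      rw [htile] at hmatch
      have hm' : (D r (a+1)).left = true := hmatch.symm
      have hw : rjWord D r a b = rjWord D r (a+1) b := by
        rw [hcons, htile, List.filter_cons]
        simp [rjWord]
      rw [hw]
      rw [hm'] at hrec
      exact hrec
    | vert =>
      rw [htile] at hmatch
      have hm' : (D r (a+1)).left = false := hmatch.symm
      have hw : rjWord D r a b = rjWord D r (a+1) b := by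
        rw [hcons, htile, List.filter_cons]
        simp [rjWord]
      rw [hw]
      rw [hm'] at hrec
      exact hrec
    | plus =>
      rw [htile] at hmatch
      have hm' : (D r (a+1)).left = true := hmatch.symm
      have hw : rjWord D r a b = rjWord D r (a+1) b := by
        rw [hcons, htile, List.filter_cons]
        simp [rjWord]
      rw [hw]
      rw [hm'] at hrec
      exact hrec
    | rtile =>
      rw [htile] at hmatch
      have hm' : (D r (a+1)).left = true := hmatch.symm
      have hw : rjWord D r a b = Tile.rtile :: rjWord D r (a+1) b := by
        rw [hcons, htile, List.filter_cons]
        simp [rjWord]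
      rw [hw]
      rw [hm'] at hrec
      exact Alt.rcons hrec
    | jtile =>
      rw [htile] at hmatch
      have hm' : (D r (a+1)).left = false := hmatch.symm
      have hw : rjWord D r a b = Tile.jtile :: rjWord D r (a+1) b := by
        rw [hcons, htile, List.filter_cons]
        simp [rjWord]
      rw [hw]
      rw [hm'] at hrec
      exact Alt.jcons hrec

/-- The RJ word of the window of an F-target is an alternating word starting
from incoming state `false`. -/
lemma main_alt (n : ℕ) (D : Grid) (r c c' : ℕ) (hD : IsMBPD n D)
    (hr1 : 1 ≤ r) (hrn : r + 1 ≤ n) (hc1 : 1 ≤ c) (hcc' : c < c') (hc'n : c' ≤ n)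
    (hheavy : (D r c).Heavy) (hlight : ∀ j, c < j → j ≤ n → ¬ (D r j).Heavy) :
    Alt false ((D r c').left) (rjWord D r (c+1) c') := by
  have hm : ∀ j, c ≤ j → j < c' → (D r j).right = (D r (j+1)).left := fun j h1 h2 =>
    hD.1 r j hr1 (by omega) (by omega) (by omega)
  have h0 : (D r (c+1)).left = false := by
    have h := hm c le_rfl hcc'
    rcases hheavy with h' | h' <;> rw [h'] at h <;> exact h.symm
  have halt := row_alt D r (c' - (c+1)) (c+1) c' (by omega)
      (fun j h1 h2 => ⟨hlight j (by omega) (by omega), hm j (by omega) h2⟩)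
  rwa [h0] at halt

/-- for an F-target `(r,c)` with associated column `c'`, the
sequence `S = D_{r,[c+1,c'-1]}` is light and its RJ subsequence is paired or
of type R; it is of type R iff `D_{r,c'}` is a plus tile, in which case if
`d` is the column of the last R of `S` and `(r,c)` is an f-target (not an
f*-target) then `D_{[r,r+1],[d,c']}` is a doublecross; and it is paired iff
`D_{r,c'}` is a vertical tile or an R tile. -/
theorem statement6 (n : ℕ) (D : Grid) (r c c' : ℕ) (hD : IsMBPD n D)
    (hT : IsFTarget n D r c c') :
    (∀ j, c < j → j < c' → ¬ (D r j).Heavy) ∧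
    (Paired (rjWord D r (c+1) c') ∨ TypeR (rjWord D r (c+1) c')) ∧
    (TypeR (rjWord D r (c+1) c') ↔ D r c' = Tile.plus) ∧
    (∀ d, c < d → d < c' → D r d = Tile.rtile →
      (∀ j, d < j → j < c' → D r j ≠ Tile.rtile) →
      TypeR (rjWord D r (c+1) c') → IsfTarget n D r c c' →
      Doublecross D r d c') ∧
    (Paired (rjWord D r (c+1) c') ↔
      (D r c' = Tile.vert ∨ D r c' = Tile.rtile)) := by
  -- Part (d) is proved first, from its own hypotheses.
  have part4 : ∀ d, c < d → d < c' → D r d = Tile.rtile →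
      (∀ j, d < j → j < c' → D r j ≠ Tile.rtile) →
      TypeR (rjWord D r (c+1) c') → IsfTarget n D r c c' →
      Doublecross D r d c' := by
    intro d hcd hdc' hdR hlast htypeR hft
    obtain ⟨hr1, hrn, hc1, hcn, hheavy, hlight, hcc', hc'n, hJ, hminJ, hlight2⟩ := hft
    have hwin : ∀ j, c < j → j < c' → ¬ (D r j).Heavy := fun j h1 h2 =>
      hlight j h1 (by omega)
    have hm : ∀ j, c ≤ j → j < c' → (D r j).right = (D r (j+1)).left := fun j h1 h2 =>
      hD.1 r j hr1 (by omega) (by omega) (by omega)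
    have hm2 : ∀ j, c ≤ j → j < c' → (D (r+1) j).right = (D (r+1) (j+1)).left :=
      fun j h1 h2 => hD.1 (r+1) j (by omega) hrn (by omega) (by omega)
    have halt := main_alt n D r c c' hD hr1 hrn hc1 hcc' hc'n hheavy hlight
    -- the outgoing state is `true`
    have hb : (D r c').left = true := by
      cases hb' : (D r c').left
      · rw [hb'] at halt
        exact absurd (alt_paired halt rfl) (fun hp => paired_not_typeR hp htypeR)
      · rfl
    -- once the state turns false after column d, it stays false until c'
    have hdown : ∀ k j, j + k = c' → d < j → (D r j).left = false →
        (D r c').left = false := by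
      intro k
      induction k with
      | zero =>
        intro j hjk _ h2
        have : j = c' := by omega
        rwa [this] at h2
      | succ k ihk =>
        intro j hjk hdj hjl
        have hj' : j < c' := by omega
        have hlj : ¬ (D r j).Heavy := hwin j (by omega) hj'
        have hnR : D r j ≠ Tile.rtile := hlast j hdj hj'
        have hmt := hm j (by omega) hj'
        have hright : (D r j).right = false := tile_A _ hlj hjl hnR
        exact ihk (j+1) (by omega) (by omega) (by rw [← hmt]; exact hright)
    -- the state stays true from d to c'
    have hup : ∀ j, d ≤ j → (j < c' → (D r j).right = true) := by
      intro j hdj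
      induction j, hdj using Nat.le_induction with
      | base => intro _; rw [hdR]; rfl
      | succ j hj ihj =>
        intro hj1
        have hjc' : j < c' := by omega
        have hl : (D r (j+1)).left = true := by
          rw [← hm j (by omega) hjc']; exact ihj hjc'
        have hlj : ¬ (D r (j+1)).Heavy := hwin (j+1) (by omega) hj1
        have hnR : D r (j+1) ≠ Tile.rtile := hlast (j+1) (by omega) hj1
        have hnJ : D r (j+1) ≠ Tile.jtile := by
          intro hJ'
          have h2 : (D r (j+1)).right = false := by rw [hJ']; rfl
          have h3 : (D r (j+1+1)).left = false := by
            rw [← hm (j+1) (by omega) hj1]; exact h2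
          have h4 := hdown (c' - (j+2)) (j+2) (by omega) (by omega) h3
          rw [hb] at h4; exact Bool.noConfusion h4
        exact tile_B _ hlj hl hnR hnJ
    -- row r segment
    have hseg1 : PipeSegment D r d c' := by
      intro j hj1 hj2
      have hl : (D r j).left = true := by
        have h := hm (j-1) (by omega) (by omega)
        rw [Nat.sub_add_cancel (by omega)] at h
        rw [← h]; exact hup (j-1) (by omega) (by omega)
      have hr' : (D r j).right = true := hup j (by omega) hj1
      have hlj : ¬ (D r j).Heavy := hwin j (by omega) hj1
      exact tile_C _ hlj hl hr'
    -- row r+1 segment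
    have hbase : (D (r+1) c).right = true := by
      have hvm := hD.2.1 r c hr1 hrn hc1 hcn
      have hu : (D (r+1) c).up = false := by
        rcases hheavy with h' | h' <;> rw [h'] at hvm <;> exact hvm.symm
      have hl2 : ¬ (D (r+1) c).Heavy := hlight2 c hc1 (by omega)
      exact tile_D _ hl2 hu
    have hup2 : ∀ j, c ≤ j → (j < c' → (D (r+1) j).right = true) := by
      intro j hcj
      induction j, hcj using Nat.le_induction with
      | base => intro _; exact hbase
      | succ j hj ihj =>
        intro hj1
        have hjc' : j < c' := by omega
        have hl : (D (r+1) (j+1)).left = true := by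
          rw [← hm2 j (by omega) hjc']; exact ihj hjc'
        have hlj : ¬ (D (r+1) (j+1)).Heavy := hlight2 (j+1) (by omega) hj1
        have hnJ : D (r+1) (j+1) ≠ Tile.jtile := hminJ (j+1) (by omega) hj1
        exact tile_E _ hlj hl hnJ
    have hseg2 : PipeSegment D (r+1) d c' := by
      intro j hj1 hj2
      have hl : (D (r+1) j).left = true := by
        have h := hm2 (j-1) (by omega) (by omega)
        rw [Nat.sub_add_cancel (by omega)] at h
        rw [← h]; exact hup2 (j-1) (by omega) (by omega)
      have hr' : (D (r+1) j).right = true := hup2 j (by omega) hj1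
      have hlj : ¬ (D (r+1) j).Heavy := hlight2 j (by omega) (by omega)
      exact tile_C _ hlj hl hr'
    exact ⟨hdc', hseg1, hseg2, hdR, hJ⟩
  rcases hT with hf | hs
  · -- f-target case
    obtain ⟨hr1, hrn, hc1, hcn, hheavy, hlight, hcc', hc'n, hJ, hminJ, hlight2⟩ := hf
    have hwin : ∀ j, c < j → j < c' → ¬ (D r j).Heavy := fun j h1 h2 =>
      hlight j h1 (by omega)
    have halt := main_alt n D r c c' hD hr1 hrn hc1 hcc' hc'n hheavy hlight
    have hdown : (D r c').down = true := by
      have h := hD.2.1 r c' hr1 hrn (by omega) hc'n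
      rw [hJ] at h; exact h
    have hlc' : ¬ (D r c').Heavy := hlight c' hcc' hc'n
    have h3 : D r c' = Tile.vert ∨ D r c' = Tile.plus ∨ D r c' = Tile.rtile :=
      tile_F _ hlc' hdown
    have key : (Paired (rjWord D r (c+1) c') ∧ (D r c').left = false) ∨
        (TypeR (rjWord D r (c+1) c') ∧ (D r c').left = true) := by
      cases hb : (D r c').left
      · rw [hb] at halt; exact Or.inl ⟨alt_paired halt rfl, rfl⟩
      · rw [hb] at halt; exact Or.inr ⟨alt_typeR halt rfl, rfl⟩
    refine ⟨hwin, key.imp And.left And.left, ?_, part4, ?_⟩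
    · constructor
      · intro ht
        rcases key with ⟨hp, _⟩ | ⟨_, hb⟩
        · exact absurd ht (fun h => paired_not_typeR hp h)
        · rcases h3 with h | h | h
          · rw [h] at hb; simp [Tile.left] at hb
          · exact h
          · rw [h] at hb; simp [Tile.left] at hb
      · intro hpl
        rcases key with ⟨_, hb⟩ | ⟨ht, _⟩
        · rw [hpl] at hb; simp [Tile.left] at hb
        · exact ht
    · constructor
      · intro hpw
        rcases key with ⟨_, hb⟩ | ⟨ht, _⟩
        · rcases h3 with h | h | h
          · exact Or.inl h
          · rw [h] at hb; simp [Tile.left] at hb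
          · exact Or.inr h
        · exact absurd hpw (fun h => paired_not_typeR h ht)
      · intro h
        rcases key with ⟨hp, _⟩ | ⟨_, hb⟩
        · exact hp
        · rcases h with h | h <;> rw [h] at hb <;> simp [Tile.left] at hb
  · -- f*-target case
    obtain ⟨hr1, hrn, hc1, hcn, hheavy, hlight, hnoJ, hc'1, hc'n, hrt, hmaxR, hlight2⟩ := hs
    by_cases hcc' : c < c'
    · have hwin : ∀ j, c < j → j < c' → ¬ (D r j).Heavy := fun j h1 h2 =>
        hlight j h1 (by omega)
      have halt := main_alt n D r c c' hD hr1 hrn hc1 hcc' hc'n hheavy hlight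
      have hlf : (D r c').left = false := by rw [hrt]; rfl
      rw [hlf] at halt
      have hp := alt_paired halt rfl
      refine ⟨hwin, Or.inl hp, ?_, part4, ?_⟩
      · constructor
        · intro ht; exact absurd ht (fun h => paired_not_typeR hp h)
        · intro hpl; rw [hrt] at hpl; simp at hpl
      · exact ⟨fun _ => Or.inr hrt, fun _ => hp⟩
    · -- degenerate case: c' ≤ c, so the window is empty
      have hW : rjWord D r (c+1) c' = [] := by
        simp [rjWord, List.Ico.eq_nil_of_le (by omega : c' ≤ c + 1)]
      refine ⟨fun j h1 h2 => absurd h2 (by omega), ?_, ?_, part4, ?_⟩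
      · rw [hW]; exact Or.inl Paired.nil
      · constructor
        · intro ht; rw [hW] at ht; exact absurd ht typeR_nil_false
        · intro hpl; rw [hrt] at hpl; simp at hpl
      · rw [hW]; exact ⟨fun _ => Or.inr hrt, fun _ => Paired.nil⟩

end BPD
end

section
/- Let (r,c) be an F-target of D ∈ MBPD(n) with associated column c', and let ρ be its right droop column. Then the MBPD obtained from D by removing the mark at (r,c) (if D_{r,c} is a marked J; otherwise D itself) admits the (r,[c,ρ])-undroop. -/
namespace BPD

private lemma tile_heavy_rd : ∀ t : Tile, t.Heavy → t.right = false ∧ t.down = false := by intro t; cases t <;> decide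

private lemma tile_light_upF : ∀ t : Tile, ¬t.Heavy → t.up = false →
    t = Tile.horiz ∨ t = Tile.rtile := by intro t; cases t <;> decide

private lemma tile_light_leftT : ∀ t : Tile, ¬t.Heavy → t ≠ Tile.jtile → t.left = true →
    t = Tile.horiz ∨ t = Tile.plus := by intro t; cases t <;> decide

private lemma tile_light_leftF : ∀ t : Tile, ¬t.Heavy → t.left = false →
    t = Tile.vert ∨ t = Tile.rtile := by intro t; cases t <;> decide

private lemma tile_light_leftT' : ∀ t : Tile, ¬t.Heavy → t.left = true →
    t = Tile.horiz ∨ t = Tile.plus ∨ t = Tile.jtile := by intro t; cases t <;> decide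

private lemma tile_light_rT : ∀ t : Tile, ¬t.Heavy → t.right = true → t ≠ Tile.horiz →
    t ≠ Tile.plus → t = Tile.rtile := by intro t; cases t <;> decide

private lemma tile_light_lFrT : ∀ t : Tile, ¬t.Heavy → t.left = false → t.right = true →
    t = Tile.rtile := by intro t; cases t <;> decide

private lemma tile_upT : ∀ t : Tile, t.up = true → t ≠ Tile.mjtile →
    ¬t.Heavy ∧ t ≠ Tile.horiz := by intro t; cases t <;> decide

private lemma tile_up_ne_horiz : ∀ t : Tile, t.up = true → t ≠ Tile.horiz := by intro t; cases t <;> decide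

private lemma tile_hp : ∀ t : Tile, t = Tile.horiz ∨ t = Tile.plus →
    t.right = true ∧ t.left = true := by intro t; cases t <;> decide

private lemma rjWord_cons (D : Grid) (i : ℕ) {a b : ℕ} (h : a < b) :
    rjWord D i a b =
      (if D i a = Tile.rtile ∨ D i a = Tile.jtile then [D i a] else []) ++
        rjWord D i (a+1) b := by
  by_cases hRJ : D i a = Tile.rtile ∨ D i a = Tile.jtile <;>
    simp [rjWord, List.Ico.eq_cons h, List.filter_cons, hRJ]

private lemma paired_aux (D : Grid) (i : ℕ) :
    ∀ k a, 2 ≤ a →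
    (∀ j, a ≤ j → j < a + k → ¬(D i j).Heavy) →
    (∀ j, a ≤ j → j < a + k → (D i j).left = (D i (j-1)).right) →
    (D i (a + k - 1)).right = false →
    ((D i (a-1)).right = false → Paired (rjWord D i a (a+k))) ∧
    ((D i (a-1)).right = true → ∃ w', Paired w' ∧ rjWord D i a (a+k) = Tile.jtile :: w') := by
  intro k
  induction k with
  | zero =>
    intro a ha _ _ hout
    simp only [Nat.add_zero] at hout ⊢
    refine ⟨fun _ => ?_, fun htrue => absurd hout (by simp [htrue])⟩
    rw [rjWord]
    rw [List.Ico.self_empty]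
    exact Paired.nil
  | succ k ih =>
    intro a ha hlight hmatch hout
    have hlt : a < a + (k+1) := by omega
    have hla : ¬(D i a).Heavy := hlight a le_rfl hlt
    have hleftA : (D i a).left = (D i (a-1)).right := hmatch a le_rfl hlt
    have hout' : (D i ((a+1) + k - 1)).right = false := by
      have he : (a+1) + k - 1 = a + (k+1) - 1 := by omega
      rw [he]; exact hout
    have ih' := ih (a+1) (by omega)
      (fun j h1 h2 => hlight j (by omega) (by omega))
      (fun j h1 h2 => hmatch j (by omega) (by omega)) hout'
    have hcons : (a+1) + k = a + (k+1) := by omega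
    rw [hcons] at ih'
    have hsucc : a + 1 - 1 = a := by omega
    rw [hsucc] at ih'
    have hstep := rjWord_cons D i hlt
    constructor
    · intro hfalse
      have hl : (D i a).left = false := by rw [hleftA]; exact hfalse
      rcases tile_light_leftF _ hla hl with hv | hr
      · rw [hstep, hv]
        simp only [if_neg (by decide : ¬(Tile.vert = Tile.rtile ∨ Tile.vert = Tile.jtile)),
          List.nil_append]
        exact ih'.1 (by rw [hv]; rfl)
      · rw [hstep, hr]
        simp only [if_pos (Or.inl rfl : Tile.rtile = Tile.rtile ∨ Tile.rtile = Tile.jtile),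
          List.singleton_append]
        obtain ⟨w', hw', hweq⟩ := ih'.2 (by rw [hr]; rfl)
        rw [hweq]
        exact Paired.cons hw'
    · intro htrue
      have hl : (D i a).left = true := by rw [hleftA]; exact htrue
      rcases tile_light_leftT' _ hla hl with hh | hp | hj
      · rw [hstep, hh]
        simp only [if_neg (by decide : ¬(Tile.horiz = Tile.rtile ∨ Tile.horiz = Tile.jtile)),
          List.nil_append]
        exact ih'.2 (by rw [hh]; rfl)
      · rw [hstep, hp]
        simp only [if_neg (by decide : ¬(Tile.plus = Tile.rtile ∨ Tile.plus = Tile.jtile)),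
          List.nil_append]
        exact ih'.2 (by rw [hp]; rfl)
      · rw [hstep, hj]
        simp only [if_pos (Or.inr rfl : Tile.jtile = Tile.rtile ∨ Tile.jtile = Tile.jtile),
          List.singleton_append]
        exact ⟨_, ih'.1 (by rw [hj]; rfl), rfl⟩

private lemma segRow (n : ℕ) (D : Grid) (r c c' : ℕ) (hD : IsMBPD n D)
    (hr1 : 1 ≤ r) (hrn : r + 1 ≤ n) (hc1 : 1 ≤ c)
    (hheavy : (D r c).Heavy)
    (hf3 : ∀ j, 1 ≤ j → j < c' → ¬(D (r+1) j).Heavy)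
    (hnoj : ∀ j, c < j → j < c' → D (r+1) j ≠ Tile.jtile)
    (hcc' : c < c') (hc'n : c' ≤ n) :
    (∀ j, c ≤ j → j < c' → (D (r+1) j).right = true) ∧
    (∀ j, c < j → j < c' → (D (r+1) j = Tile.horiz ∨ D (r+1) j = Tile.plus)) := by
  obtain ⟨hH, hV, hRB, hBB, hTB, hLB, hOut⟩ := hD
  have hbase : (D (r+1) c).right = true := by
    have hup : (D (r+1) c).up = false := by
      rw [← hV r c hr1 hrn hc1 (by omega)]
      exact (tile_heavy_rd _ hheavy).2
    rcases tile_light_upF _ (hf3 c hc1 hcc') hup with h | h <;> rw [h] <;> rfl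
  have hright : ∀ j, c ≤ j → j < c' → (D (r+1) j).right = true := by
    intro j hj
    induction j, hj using Nat.le_induction with
    | base => intro _; exact hbase
    | succ j hj ihj =>
      intro hjc
      have hleft : (D (r+1) (j+1)).left = true := by
        rw [← hH (r+1) j (by omega) (by omega) (by omega) (by omega)]
        exact ihj (by omega)
      rcases tile_light_leftT _ (hf3 (j+1) (by omega) hjc)
        (hnoj (j+1) (by omega) hjc) hleft with h | h <;> rw [h] <;> rfl
  refine ⟨hright, fun j hcj hjc' => ?_⟩
  have hleft : (D (r+1) j).left = true := by
    have hj1 : j - 1 + 1 = j := by omega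
    have hh := hH (r+1) (j-1) (by omega) (by omega) (by omega) (by omega)
    rw [hj1] at hh
    rw [← hh]
    exact hright (j-1) (by omega) (by omega)
  exact tile_light_leftT _ (hf3 j (by omega) hjc') (hnoj j hcj hjc') hleft

private lemma main_core (n : ℕ) (D : Grid) (r c c' ρ : ℕ) (hD : IsMBPD n D)
    (hr1 : 1 ≤ r) (hrn : r + 1 ≤ n) (hc1 : 1 ≤ c)
    (hheavy : (D r c).Heavy)
    (hf1 : ∀ j, c < j → j ≤ n → ¬(D r j).Heavy)
    (hf3 : ∀ j, 1 ≤ j → j < c' → ¬(D (r+1) j).Heavy)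
    (hnoj : ∀ j, c < j → j < c' → D (r+1) j ≠ Tile.jtile)
    (hcc' : c < c') (hc'n : c' ≤ n)
    (hcρ : c < ρ) (hρc' : ρ ≤ c')
    (hρleft : (D r ρ).left = false)
    (hρhoriz : D (r+1) ρ ≠ Tile.horiz)
    (hρheavy : ¬(D (r+1) ρ).Heavy) :
    AdmitsUndroop (unmark D r c) r c ρ := by
  obtain ⟨hseg1, hseg2⟩ := segRow n D r c c' hD hr1 hrn hc1 hheavy hf3 hnoj hcc' hc'n
  obtain ⟨hH, hV, hRB, hBB, hTB, hLB, hOut⟩ := hD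
  have hun : ∀ i j, ¬(i = r ∧ j = c) → unmark D r c i j = D i j := by
    intro i j h
    have hng : ¬(i = r ∧ j = c ∧ D r c = Tile.mjtile) := fun hh => h ⟨hh.1, hh.2.1⟩
    simp only [unmark, if_neg hng]
  have hunrow : ∀ j, unmark D r c (r+1) j = D (r+1) j :=
    fun j => hun _ _ (fun h => by omega)
  have huncol : ∀ j, c < j → unmark D r c r j = D r j :=
    fun j hj => hun _ _ (fun h => by omega)
  refine ⟨hcρ, ?_, ?_, ?_, ?_, ?_, ?_, ?_⟩
  · intro j h1 h2
    rw [hunrow]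
    rcases eq_or_lt_of_le h2 with he | hl
    · rw [he]; exact hρheavy
    · exact hf3 j (by omega) (by omega)
  · intro j h1 h2
    rw [huncol j h1]
    exact hf1 j h1 (by omega)
  · show ¬ unmark D r c r c = Tile.mjtile
    unfold unmark
    split_ifs with h
    · decide
    · intro hc
      exact h ⟨rfl, rfl, hc⟩
  · intro j hjρ hcj
    rw [hunrow]
    exact hseg2 j (by omega) (by omega)
  · -- Paired
    have hword : rjWord (unmark D r c) r (c+1) ρ = rjWord D r (c+1) ρ := by
      unfold rjWord
      congr 1
      apply List.map_congr_left
      intro x hx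
      rw [List.Ico.mem] at hx
      exact huncol x (by omega)
    rw [hword]
    have hρn : ρ ≤ n := by omega
    have hpa := paired_aux D r (ρ - (c+1)) (c+1) (by omega)
      (fun j h1 h2 => hf1 j (by omega) (by omega))
      (fun j h1 h2 => by
        have hj1 : j - 1 + 1 = j := by omega
        have hh := hH r (j-1) hr1 (by omega) (by omega) (by omega)
        rw [hj1] at hh
        rw [hh])
      (by
        have he : c + 1 + (ρ - (c+1)) - 1 = ρ - 1 := by omega
        rw [he]
        have hj1 : ρ - 1 + 1 = ρ := by omega
        have hh := hH r (ρ-1) hr1 (by omega) (by omega) (by omega)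
        rw [hj1] at hh
        rw [hh]
        exact hρleft)
    have hk : c + 1 + (ρ - (c+1)) = ρ := by omega
    rw [hk] at hpa
    have hin : (D r (c + 1 - 1)).right = false := by
      have : c + 1 - 1 = c := by omega
      rw [this]
      exact (tile_heavy_rd _ hheavy).1
    exact hpa.1 hin
  · rw [hunrow]; exact hρhoriz
  · rw [hunrow]
    have hup : (D (r+1) c).up = false := by
      rw [← hV r c hr1 hrn hc1 (by omega)]
      exact (tile_heavy_rd _ hheavy).2
    rcases tile_light_upF _ (hf3 c hc1 hcc') hup with h | h <;> rw [h] <;> decide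

private lemma fstar_lt (n : ℕ) (D : Grid) (r c c' : ℕ) (hD : IsMBPD n D)
    (h : IsfStarTarget n D r c c') : c < c' := by
  obtain ⟨hr1, hrn, hc1, hcn, hheavy, hf1, hf2, hc'1, hc'n, hrt, hmax, hf3⟩ := h
  obtain ⟨hH, hV, hRB, hBB, hTB, hLB, hOut⟩ := hD
  have hcn' : c < n := by
    rcases lt_or_eq_of_le hcn with h | h
    · exact h
    · exfalso
      have hb := hRB r hr1 (by omega)
      rw [← h, (tile_heavy_rd _ hheavy).1] at hb
      exact absurd hb (by simp)
  classical
  have hex : ∃ j, c < j ∧ (D r j).right = true := ⟨n, hcn', hRB r hr1 (by omega)⟩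
  set j0 := Nat.find hex with hj0def
  have hj0 := Nat.find_spec hex
  have hj0n : j0 ≤ n := Nat.find_min' hex ⟨hcn', hRB r hr1 (by omega)⟩
  have hj0c : c < j0 := hj0.1
  have hleft : (D r j0).left = false := by
    have hm : j0 - 1 + 1 = j0 := by omega
    have hh := hH r (j0-1) hr1 (by omega) (by omega) (by omega)
    rw [hm] at hh
    rw [← hh]
    rcases eq_or_lt_of_le (by omega : c ≤ j0 - 1) with he | hl
    · rw [← he]; exact (tile_heavy_rd _ hheavy).1
    · have hmin := Nat.find_min hex (show j0 - 1 < j0 by omega)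
      by_contra hcon
      exact hmin ⟨hl, by simpa using hcon⟩
  have hrt0 : D r j0 = Tile.rtile :=
    tile_light_lFrT _ (hf1 j0 hj0c hj0n) hleft hj0.2
  by_contra hcc
  push_neg at hcc
  exact hmax j0 (by omega) hj0n hrt0

private lemma caseO_left (n : ℕ) (D : Grid) (r c c' : ℕ) (hD : IsMBPD n D)
    (hf : IsfTarget n D r c c')
    (hno : ¬ ∃ d, c < d ∧ d < c' ∧ Doublecross D r d c') :
    (D r c').left = false := by
  obtain ⟨hr1, hrn, hc1, hcn, hheavy, hf1, hcc', hc'n, hjt, hmin, hf3⟩ := hf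
  have hseg := segRow n D r c c' hD hr1 hrn hc1 hheavy hf3 hmin hcc' hc'n
  obtain ⟨hH, hV, hRB, hBB, hTB, hLB, hOut⟩ := hD
  by_contra hcon
  have hlt : (D r c').left = true := by
    cases h : (D r c').left
    · exact absurd h hcon
    · rfl
  classical
  have hS : ∃ d, c < d ∧ d < c' ∧ D r d ≠ Tile.horiz ∧ D r d ≠ Tile.plus := by
    by_contra hall
    push_neg at hall
    have key : ∀ j, c ≤ j → j < c' → (D r j).right = false := by
      intro j hj
      induction j, hj using Nat.le_induction with
      | base => intro _; exact (tile_heavy_rd _ hheavy).1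
      | succ j hj ihj =>
        intro hjc
        exfalso
        rcases Classical.em (D r (j+1) = Tile.horiz) with hh | hh
        · have hleft : (D r (j+1)).left = true := by rw [hh]; rfl
          rw [← hH r j hr1 (by omega) (by omega) (by omega), ihj (by omega)] at hleft
          exact absurd hleft (by simp)
        · have hp := hall (j+1) (by omega) hjc hh
          have hleft : (D r (j+1)).left = true := by rw [hp]; rfl
          rw [← hH r j hr1 (by omega) (by omega) (by omega), ihj (by omega)] at hleft
          exact absurd hleft (by simp)
    have h2 : (D r c').left = false := by
      have hm : c' - 1 + 1 = c' := by omega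
      have hh := hH r (c'-1) hr1 (by omega) (by omega) (by omega)
      rw [hm] at hh
      rw [← hh]
      exact key (c'-1) (by omega) (by omega)
    rw [h2] at hlt
    exact absurd hlt (by simp)
  obtain ⟨d, hd1, hd2, hd3, hd4⟩ := hS
  set P : ℕ → Prop := fun j => c < j ∧ j < c' ∧ D r j ≠ Tile.horiz ∧ D r j ≠ Tile.plus with hPdef
  have hPdec : DecidablePred P := fun j => by
    rw [hPdef]; exact inferInstanceAs (Decidable (_ ∧ _ ∧ _ ∧ _))
  set d0 := Nat.findGreatest P c' with hd0def
  have hP0 : P d0 := Nat.findGreatest_spec (le_of_lt hd2) ⟨hd1, hd2, hd3, hd4⟩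
  obtain ⟨h01, h02, h03, h04⟩ := hP0
  have hmaxseg : ∀ j, d0 < j → j < c' → D r j = Tile.horiz ∨ D r j = Tile.plus := by
    intro j hj1 hj2
    have := Nat.findGreatest_is_greatest (P := P) hj1 (le_of_lt hj2)
    rw [hPdef] at this
    by_contra hcon2
    push_neg at hcon2
    exact this ⟨by omega, hj2, hcon2.1, hcon2.2⟩
  have hright : (D r d0).right = true := by
    rw [hH r d0 hr1 (by omega) (by omega) (by omega)]
    rcases eq_or_lt_of_le (show d0 + 1 ≤ c' by omega) with he | hl
    · rw [he]; exact hlt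
    · exact (tile_hp _ (hmaxseg (d0+1) (by omega) hl)).2
  have hrt : D r d0 = Tile.rtile :=
    tile_light_rT _ (hf1 d0 h01 (by omega)) hright h03 h04
  exact hno ⟨d0, h01, h02, h02,
    (fun j hj1 hj2 => hmaxseg j hj2 hj1),
    (fun j hj1 hj2 => hseg.2 j (by omega) hj1),
    hrt, hjt⟩

/-- for an F-target `(r,c)` with associated column `c'` and
right droop column `ρ`, the MBPD obtained from `D` by removing the mark at
`(r,c)` (if any) admits the `(r,[c,ρ])`-undroop. -/
theorem statement7 (n : ℕ) (D : Grid) (r c c' ρ : ℕ) (hD : IsMBPD n D)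
    (hT : IsFTarget n D r c c') (hρ : FRightDroop n D r c c' ρ) :
    AdmitsUndroop (unmark D r c) r c ρ := by
  clear hT
  unfold FRightDroop FCaseT FCaseO at hρ
  rcases hρ with ⟨hcase, hρeq⟩ | ⟨hf, hcρ, hρc', hdc⟩
  · rw [hρeq]
    rcases hcase with hstar | ⟨hf, hno⟩
    · have hcc' := fstar_lt n D r c c' hD hstar
      obtain ⟨hr1, hrn, hc1, hcn, hheavy, hf1, hf2, hc'1, hc'n, hrt, hmax, hf3⟩ := hstar
      have hnoj : ∀ j, c < j → j < c' → D (r+1) j ≠ Tile.jtile :=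
        fun j h1 h2 => (hf2 j h1 (by omega)).1
      have hup : (D (r+1) c').up = true := by
        rw [← hD.2.1 r c' hr1 hrn hc'1 hc'n, hrt]; rfl
      have hud := tile_upT _ hup (hf2 c' hcc' hc'n).2
      exact main_core n D r c c' c' hD hr1 hrn hc1 hheavy hf1 hf3 hnoj hcc' hc'n hcc' le_rfl
        (by rw [hrt]; rfl) hud.2 hud.1
    · have hleft := caseO_left n D r c c' hD hf hno
      obtain ⟨hr1, hrn, hc1, hcn, hheavy, hf1, hcc', hc'n, hjt, hmin, hf3⟩ := hf
      exact main_core n D r c c' c' hD hr1 hrn hc1 hheavy hf1 hf3 hmin hcc' hc'n hcc' le_rfl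
        hleft (by rw [hjt]; decide) (by rw [hjt]; decide)
  · obtain ⟨hr1, hrn, hc1, hcn, hheavy, hf1, hcc', hc'n, hjt, hmin, hf3⟩ := hf
    obtain ⟨hdlt, hsr, hsr1, hrt, hjt'⟩ := hdc
    have hup : (D (r+1) ρ).up = true := by
      rw [← hD.2.1 r ρ hr1 hrn (by omega) (by omega), hrt]; rfl
    exact main_core n D r c c' ρ hD hr1 hrn hc1 hheavy hf1 hf3 hmin hcc' hc'n hcρ
      (le_of_lt hρc') (by rw [hrt]; rfl) (tile_up_ne_horiz _ hup)
      (hf3 ρ (by omega) hρc')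

end BPD
end
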